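/- arXiv:1105.1308 — 4 statements merged into one kernel-verified Lean document; each statement's English description precedes it below -/
import Mathlib

section
/- Let A : ℝ → ℝ be continuous and concave on [0,1], meaning A(v) ≥ A(0) + v (A(1) - A(0)) for all v ∈ [0,1]. Let x₀ ∈ ℝ, set c = A(1) - A(0), and define u(t,x) = H(x - x₀ - c t). Then u satisfies all Kruzhkov entropy inequalities: for every k ∈ ℝ and every nonnegative smooth compactly supported test function φ supported in (0,∞) × ℝ, ∫₀^∞ ∫_ℝ ( |u(t,x) - k| ∂ₜφ(t,x) + sgn(u(t,x) - k) (A(u(t,x)) - A(k)) ∂ₓφ(t,x) ) dx dt ≥ 0, where sgn(s) = 1 for s > 0, sgn(s) = -1 for s < 0, and sgn(0) = 0. -/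
open MeasureTheory Set

/-- The Heaviside function: `H(y) = 1` for `y ≥ 0`, `H(y) = 0` for `y < 0`. -/
noncomputable def Heaviside (y : ℝ) : ℝ := if 0 ≤ y then 1 else 0

/-- The sign function: `sgn s = 1` for `s > 0`, `-1` for `s < 0`, `0` for `s = 0`. -/
noncomputable def sgn (s : ℝ) : ℝ := if 0 < s then 1 else if s < 0 then -1 else 0

namespace KruzhkovAux

/-- compact support of `t ↦ f (t, g t)`. -/
lemma hcs_line {f : ℝ × ℝ → ℝ} (hf : HasCompactSupport f) (g : ℝ → ℝ) :
    HasCompactSupport (fun t : ℝ => f (t, g t)) := by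
  obtain ⟨R, hR⟩ := hf.isBounded.subset_closedBall 0
  apply HasCompactSupport.intro (isCompact_Icc (a := -R) (b := R))
  intro t ht
  apply image_eq_zero_of_notMem_tsupport
  intro hmem
  have h1 : ‖((t, g t) : ℝ × ℝ)‖ ≤ R := by
    simpa [Metric.mem_closedBall, dist_zero_right] using hR hmem
  have h2 : |t| ≤ R := le_trans (norm_fst_le ((t, g t) : ℝ × ℝ)) h1
  rw [mem_Icc, not_and_or] at ht
  rcases ht with h | h
  · rw [abs_le] at h2; exact h h2.1
  · rw [abs_le] at h2; exact h h2.2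

/-- compact support of `x ↦ f (t, x)`. -/
lemma hcs_slice {f : ℝ × ℝ → ℝ} (hf : HasCompactSupport f) (t : ℝ) :
    HasCompactSupport (fun x : ℝ => f (t, x)) := by
  obtain ⟨R, hR⟩ := hf.isBounded.subset_closedBall 0
  apply HasCompactSupport.intro (isCompact_Icc (a := -R) (b := R))
  intro x hx
  apply image_eq_zero_of_notMem_tsupport
  intro hmem
  have h1 : ‖((t, x) : ℝ × ℝ)‖ ≤ R := by
    simpa [Metric.mem_closedBall, dist_zero_right] using hR hmem
  have h2 : |x| ≤ R := le_trans (norm_snd_le ((t, x) : ℝ × ℝ)) h1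
  rw [mem_Icc, not_and_or] at hx
  rcases hx with h | h
  · rw [abs_le] at h2; exact h h2.1
  · rw [abs_le] at h2; exact h h2.2

/-- compact support is preserved by the shear `(t, y) ↦ (t, y + c t)`. -/
lemma hcs_shear {f : ℝ × ℝ → ℝ} (hf : HasCompactSupport f) (c : ℝ) :
    HasCompactSupport (fun p : ℝ × ℝ => f (p.1, p.2 + c * p.1)) := by
  let e : ℝ × ℝ ≃ₜ ℝ × ℝ :=
    { toFun := fun p => (p.1, p.2 + c * p.1)
      invFun := fun p => (p.1, p.2 - c * p.1)
      left_inv := by intro p; simp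
      right_inv := by intro p; simp
      continuous_toFun := by fun_prop
      continuous_invFun := by fun_prop }
  exact hf.comp_isClosedEmbedding e.isClosedEmbedding

open Filter Topology in
lemma tendsto_zero_of_hcs {g : ℝ → ℝ} (hg : HasCompactSupport g) :
    Filter.Tendsto g Filter.atTop (nhds 0) := by
  rw [hasCompactSupport_iff_eventuallyEq, Filter.coclosedCompact_eq_cocompact] at hg
  exact hg.filter_mono _root_.atTop_le_cocompact |>.tendsto

/-- The whole-line integral of the derivative of a compactly supported C¹ function is 0. -/
lemma integral_deriv_zero {g : ℝ → ℝ} (hg : ContDiff ℝ 1 g) (h2 : HasCompactSupport g) :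
    ∫ x : ℝ, deriv g x = 0 := by
  have hint : Integrable (deriv g) :=
    (hg.continuous_deriv le_rfl).integrable_of_hasCompactSupport h2.deriv
  have h1 : ∫ x in Ioi (0:ℝ), deriv g x = -g 0 := h2.integral_Ioi_deriv_eq hg 0
  have h3 : ∫ x in Iic (0:ℝ), deriv g x = g 0 := h2.integral_Iic_deriv_eq hg 0
  rw [← intervalIntegral.integral_Iic_add_Ioi hint.integrableOn hint.integrableOn, h1, h3]
  ring

/-- change of variables `x = y + a` on `Ici`. -/
lemma setIntegral_Ici_comp_add (h : ℝ → ℝ) (b a : ℝ) :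
    ∫ x in Ici (b + a), h x = ∫ y in Ici b, h (y + a) := by
  rw [← integral_indicator measurableSet_Ici, ← integral_indicator measurableSet_Ici]
  rw [← integral_add_right_eq_self (fun x => (Ici (b + a)).indicator h x) a]
  congr 1
  funext y
  simp only [indicator_apply, mem_Ici, add_le_add_iff_right]

end KruzhkovAux

/-- If `A` is continuous and concave on `[0,1]` (its graph lies above the chord from
`(0, A 0)` to `(1, A 1)`), then the shock `u(t,x) = H(x - x₀ - c t)` travelling with
the Rankine–Hugoniot speed `c = A(1) - A(0)` satisfies all Kruzhkov entropy
inequalities on `(0,∞) × ℝ`. -/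
theorem heaviside_shock_kruzhkov_entropy
    (A : ℝ → ℝ) (hA : Continuous A)
    (hconc : ∀ v ∈ Icc (0 : ℝ) 1, A v ≥ A 0 + v * (A 1 - A 0))
    (x₀ c : ℝ) (hc : c = A 1 - A 0)
    (u : ℝ → ℝ → ℝ) (hu : ∀ t x, u t x = Heaviside (x - x₀ - c * t)) :
    ∀ k : ℝ, ∀ φ : ℝ × ℝ → ℝ, ContDiff ℝ (⊤ : ℕ∞) φ → HasCompactSupport φ →
      (∀ p : ℝ × ℝ, 0 ≤ φ p) →
      tsupport φ ⊆ (Ioi (0 : ℝ)) ×ˢ (univ : Set ℝ) →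
      0 ≤ ∫ t in Ioi (0 : ℝ), ∫ x : ℝ,
            (|u t x - k| * deriv (fun s => φ (s, x)) t
              + sgn (u t x - k) * (A (u t x) - A k) * deriv (fun y => φ (t, y)) x) := by
  intro k φ hφ hφc hφ0 hφsupp
  -- abbreviations
  set α : ℝ := |(0:ℝ) - k| with hα
  set β : ℝ := |(1:ℝ) - k| with hβ
  set P : ℝ := sgn ((0:ℝ) - k) * (A 0 - A k) with hP
  set Q : ℝ := sgn ((1:ℝ) - k) * (A 1 - A k) with hQ
  set Dt : ℝ × ℝ → ℝ := fun p => fderiv ℝ φ p (1, 0) with hDtdef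
  set Dx : ℝ × ℝ → ℝ := fun p => fderiv ℝ φ p (0, 1) with hDxdef
  have hφ1 : ContDiff ℝ 1 φ := hφ.of_le (by simp)
  have hd : Differentiable ℝ φ := hφ1.differentiable one_ne_zero
  -- partial derivatives
  have hDt_eq : ∀ t x : ℝ, deriv (fun s => φ (s, x)) t = Dt (t, x) := by
    intro t x
    have h1 : HasDerivAt (fun s : ℝ => (s, x)) ((1:ℝ), (0:ℝ)) t :=
      (hasDerivAt_id t).prodMk (hasDerivAt_const t x)
    exact (((hd (t, x)).hasFDerivAt).comp_hasDerivAt t h1).deriv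
  have hDx_eq : ∀ t x : ℝ, deriv (fun y => φ (t, y)) x = Dx (t, x) := by
    intro t x
    have h1 : HasDerivAt (fun y : ℝ => (t, y)) ((0:ℝ), (1:ℝ)) x :=
      (hasDerivAt_const x t).prodMk (hasDerivAt_id x)
    exact (((hd (t, x)).hasFDerivAt).comp_hasDerivAt x h1).deriv
  have hDiag : ∀ y t : ℝ, HasDerivAt (fun t => φ (t, y + c * t))
      (Dt (t, y + c * t) + c * Dx (t, y + c * t)) t := by
    intro y t
    have hb : HasDerivAt (fun t : ℝ => y + c * t) c t := by
      simpa using ((hasDerivAt_id t).const_mul c).const_add y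
    have h1 : HasDerivAt (fun t : ℝ => (t, y + c * t)) ((1:ℝ), c) t :=
      (hasDerivAt_id t).prodMk hb
    have h2 := ((hd (t, y + c * t)).hasFDerivAt).comp_hasDerivAt t h1
    refine h2.congr_deriv ?_
    have h3 : ((1:ℝ), c) = ((1:ℝ), (0:ℝ)) + c • ((0:ℝ), (1:ℝ)) := by
      simp [Prod.ext_iff]
    rw [h3, map_add, ContinuousLinearMap.map_smul]
    simp [hDtdef, hDxdef, smul_eq_mul]
  -- regularity of the partial derivatives
  have hDt_cont : Continuous Dt := by
    have h := hφ.continuous_fderiv (by simp)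
    exact isBoundedBilinearMap_apply.continuous.comp (h.prodMk continuous_const)
  have hDx_cont : Continuous Dx := by
    have h := hφ.continuous_fderiv (by simp)
    exact isBoundedBilinearMap_apply.continuous.comp (h.prodMk continuous_const)
  have hDt_supp : HasCompactSupport Dt := hφc.fderiv_apply ℝ ((1:ℝ), (0:ℝ))
  have hDx_supp : HasCompactSupport Dx := hφc.fderiv_apply ℝ ((0:ℝ), (1:ℝ))
  have hDt_int : Integrable Dt := hDt_cont.integrable_of_hasCompactSupport hDt_supp
  have hDx_int : Integrable Dx := hDx_cont.integrable_of_hasCompactSupport hDx_supp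
  -- φ vanishes at t = 0
  have hφ0x : ∀ x : ℝ, φ (0, x) = 0 := by
    intro x
    apply image_eq_zero_of_notMem_tsupport
    intro hmem
    exact lt_irrefl (0:ℝ) (hφsupp hmem).1
  -- slice integrabilities
  have hslice_int_t : ∀ t : ℝ, Integrable (fun x => Dt (t, x)) := fun t =>
    (hDt_cont.comp (continuous_const.prodMk continuous_id)).integrable_of_hasCompactSupport
      (KruzhkovAux.hcs_slice hDt_supp t)
  have hslice_int_x : ∀ t : ℝ, Integrable (fun x => Dx (t, x)) := fun t =>
    (hDx_cont.comp (continuous_const.prodMk continuous_id)).integrable_of_hasCompactSupport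
      (KruzhkovAux.hcs_slice hDx_supp t)
  -- (E1) whole-line integral of x-derivative vanishes
  have E1 : ∀ t : ℝ, ∫ x : ℝ, Dx (t, x) = 0 := by
    intro t
    have hg : ContDiff ℝ 1 (fun y => φ (t, y)) :=
      hφ1.comp (contDiff_const.prodMk contDiff_id)
    have hgc : HasCompactSupport (fun y => φ (t, y)) := KruzhkovAux.hcs_slice hφc t
    have heq : (fun x : ℝ => Dx (t, x)) = deriv (fun y => φ (t, y)) :=
      funext fun x => (hDx_eq t x).symm
    rw [heq]
    exact KruzhkovAux.integral_deriv_zero hg hgc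
  -- (E2) half-line integral of x-derivative
  have E2 : ∀ t : ℝ, ∫ x in Ici (x₀ + c * t), Dx (t, x) = -φ (t, x₀ + c * t) := by
    intro t
    have hg : ContDiff ℝ 1 (fun y => φ (t, y)) :=
      hφ1.comp (contDiff_const.prodMk contDiff_id)
    have hgc : HasCompactSupport (fun y => φ (t, y)) := KruzhkovAux.hcs_slice hφc t
    have heq : (fun x : ℝ => Dx (t, x)) = deriv (fun y => φ (t, y)) :=
      funext fun x => (hDx_eq t x).symm
    rw [MeasureTheory.integral_Ici_eq_integral_Ioi, heq]
    exact hgc.integral_Ioi_deriv_eq hg (x₀ + c * t)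
  -- (E3) time-derivative integrates to zero on (0,∞)
  have E3 : ∀ x : ℝ, ∫ t in Ioi (0:ℝ), Dt (t, x) = 0 := by
    intro x
    have hg : ContDiff ℝ 1 (fun s => φ (s, x)) :=
      hφ1.comp (contDiff_id.prodMk contDiff_const)
    have hgc : HasCompactSupport (fun s => φ (s, x)) :=
      KruzhkovAux.hcs_line hφc (fun _ => x)
    have heq : (fun t : ℝ => Dt (t, x)) = deriv (fun s => φ (s, x)) :=
      funext fun t => (hDt_eq t x).symm
    rw [heq, hgc.integral_Ioi_deriv_eq hg 0, hφ0x x, neg_zero]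
  -- integrability along the shock-parallel lines
  have hline_t_int : ∀ y : ℝ, Integrable (fun t => Dt (t, y + c * t)) := fun y =>
    (hDt_cont.comp (continuous_id.prodMk (by fun_prop))).integrable_of_hasCompactSupport
      (KruzhkovAux.hcs_line hDt_supp (fun t => y + c * t))
  have hline_x_int : ∀ y : ℝ, Integrable (fun t => Dx (t, y + c * t)) := fun y =>
    (hDx_cont.comp (continuous_id.prodMk (by fun_prop))).integrable_of_hasCompactSupport
      (KruzhkovAux.hcs_line hDx_supp (fun t => y + c * t))
  -- (E5) directional FTC along the shock-parallel lines
  have E5 : ∀ y : ℝ, ∫ t in Ioi (0:ℝ), Dt (t, y + c * t)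
      = -c * ∫ t in Ioi (0:ℝ), Dx (t, y + c * t) := by
    intro y
    have h0 : ∫ t in Ioi (0:ℝ), (Dt (t, y + c * t) + c * Dx (t, y + c * t)) = 0 := by
      have hint : IntegrableOn (fun t => Dt (t, y + c * t) + c * Dx (t, y + c * t)) (Ioi 0) :=
        ((hline_t_int y).add ((hline_x_int y).const_mul c)).integrableOn
      have htend : Filter.Tendsto (fun t => φ (t, y + c * t)) Filter.atTop (nhds 0) :=
        KruzhkovAux.tendsto_zero_of_hcs (KruzhkovAux.hcs_line hφc (fun t => y + c * t))
      rw [MeasureTheory.integral_Ioi_of_hasDerivAt_of_tendsto'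
        (fun t _ => hDiag y t) hint htend]
      simp [hφ0x]
    rw [MeasureTheory.integral_add ((hline_t_int y).integrableOn)
      (((hline_x_int y).const_mul c).integrableOn), MeasureTheory.integral_const_mul] at h0
    linarith
  -- product-measure integrability after restriction
  have hresP1 : ∀ {f : ℝ × ℝ → ℝ}, Integrable f (volume : Measure (ℝ × ℝ)) →
      Integrable f (((volume : Measure ℝ).restrict (Ioi (0:ℝ))).prod (volume : Measure ℝ)) := by
    intro f hf
    rw [Measure.restrict_prod_eq_prod_univ, ← Measure.volume_eq_prod]
    exact hf.restrict
  have hresP2 : ∀ {f : ℝ × ℝ → ℝ}, Integrable f (volume : Measure (ℝ × ℝ)) →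
      Integrable f (((volume : Measure ℝ).restrict (Ioi (0:ℝ))).prod
        ((volume : Measure ℝ).restrict (Ici x₀))) := by
    intro f hf
    rw [Measure.prod_restrict, ← Measure.volume_eq_prod]
    exact hf.restrict
  -- sheared partial derivatives are integrable on the plane
  have hΦt_int : Integrable (fun p : ℝ × ℝ => Dt (p.1, p.2 + c * p.1)) := by
    refine (hDt_cont.comp (by fun_prop)).integrable_of_hasCompactSupport ?_
    exact KruzhkovAux.hcs_shear hDt_supp c
  have hΦx_int : Integrable (fun p : ℝ × ℝ => Dx (p.1, p.2 + c * p.1)) := by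
    refine (hDx_cont.comp (by fun_prop)).integrable_of_hasCompactSupport ?_
    exact KruzhkovAux.hcs_shear hDx_supp c
  -- Fubini swaps
  have hswap1 : ∫ t in Ioi (0:ℝ), ∫ x : ℝ, Dt (t, x)
      = ∫ x : ℝ, ∫ t in Ioi (0:ℝ), Dt (t, x) := by
    apply MeasureTheory.integral_integral_swap
    exact hresP1 hDt_int
  have hswap2 : ∫ t in Ioi (0:ℝ), ∫ y in Ici x₀, Dt (t, y + c * t)
      = ∫ y in Ici x₀, ∫ t in Ioi (0:ℝ), Dt (t, y + c * t) := by
    apply MeasureTheory.integral_integral_swap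
    exact hresP2 hΦt_int
  have hswap3 : ∫ y in Ici x₀, ∫ t in Ioi (0:ℝ), Dx (t, y + c * t)
      = ∫ t in Ioi (0:ℝ), ∫ y in Ici x₀, Dx (t, y + c * t) := by
    symm
    apply MeasureTheory.integral_integral_swap
    exact hresP2 hΦx_int
  -- the two main double-integral identities
  have hterm0 : ∫ t in Ioi (0:ℝ), (∫ x : ℝ, Dt (t, x)) = 0 := by
    rw [hswap1]
    simp [E3]
  have hM : ∫ t in Ioi (0:ℝ), ∫ y in Ici x₀, Dt (t, y + c * t)
      = c * ∫ t in Ioi (0:ℝ), φ (t, x₀ + c * t) := by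
    rw [hswap2]
    have h1 : ∫ y in Ici x₀, ∫ t in Ioi (0:ℝ), Dt (t, y + c * t)
        = ∫ y in Ici x₀, (-c) * ∫ t in Ioi (0:ℝ), Dx (t, y + c * t) :=
      MeasureTheory.integral_congr_ae (MeasureTheory.ae_of_all _ fun y => E5 y)
    rw [h1, MeasureTheory.integral_const_mul, hswap3]
    have h2 : ∫ t in Ioi (0:ℝ), ∫ y in Ici x₀, Dx (t, y + c * t)
        = ∫ t in Ioi (0:ℝ), (-φ (t, x₀ + c * t)) := by
      refine MeasureTheory.integral_congr_ae (MeasureTheory.ae_of_all _ fun t => ?_)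
      show (∫ y in Ici x₀, Dx (t, y + c * t)) = -φ (t, x₀ + c * t)
      rw [← KruzhkovAux.setIntegral_Ici_comp_add (fun x => Dx (t, x)) x₀ (c * t)]
      exact E2 t
    rw [h2, MeasureTheory.integral_neg]
    ring
  -- rewrite the integrand pointwise
  have hGoal : (fun t => ∫ x : ℝ,
      (|u t x - k| * deriv (fun s => φ (s, x)) t
        + sgn (u t x - k) * (A (u t x) - A k) * deriv (fun y => φ (t, y)) x))
      = fun t => ∫ x : ℝ, (α * Dt (t, x) + P * Dx (t, x)
          + (Ici (x₀ + c * t)).indicator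
              (fun x => (β - α) * Dt (t, x) + (Q - P) * Dx (t, x)) x) := by
    funext t
    congr 1
    funext x
    rw [hDt_eq t x, hDx_eq t x, hu t x]
    unfold Heaviside
    by_cases h : (0:ℝ) ≤ x - x₀ - c * t
    · have hx : x ∈ Ici (x₀ + c * t) := by simp only [mem_Ici]; linarith
      rw [if_pos h, indicator_of_mem hx, hα, hβ, hP, hQ]
      ring
    · have hx : x ∉ Ici (x₀ + c * t) := by
        simp only [mem_Ici]; intro hh; exact h (by linarith)
      rw [if_neg h, indicator_of_notMem hx, hα, hP]
      ring
  -- split the inner integral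
  have hinner : ∀ t : ℝ, (∫ x : ℝ, (α * Dt (t, x) + P * Dx (t, x)
      + (Ici (x₀ + c * t)).indicator
          (fun x => (β - α) * Dt (t, x) + (Q - P) * Dx (t, x)) x))
      = α * (∫ x : ℝ, Dt (t, x))
        + ((β - α) * (∫ y in Ici x₀, Dt (t, y + c * t))
            + (Q - P) * (-φ (t, x₀ + c * t))) := by
    intro t
    have hf1 : Integrable (fun x : ℝ => α * Dt (t, x)) := (hslice_int_t t).const_mul α
    have hf2 : Integrable (fun x : ℝ => P * Dx (t, x)) := (hslice_int_x t).const_mul P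
    have hf3 : Integrable (fun x : ℝ => (β - α) * Dt (t, x)) := (hslice_int_t t).const_mul _
    have hf4 : Integrable (fun x : ℝ => (Q - P) * Dx (t, x)) := (hslice_int_x t).const_mul _
    have hf12 : Integrable (fun x : ℝ => α * Dt (t, x) + P * Dx (t, x)) := hf1.add hf2
    have hf34 : Integrable (fun x : ℝ => (β - α) * Dt (t, x) + (Q - P) * Dx (t, x)) :=
      hf3.add hf4
    have hind : Integrable ((Ici (x₀ + c * t)).indicator
        (fun x => (β - α) * Dt (t, x) + (Q - P) * Dx (t, x))) :=
      hf34.indicator measurableSet_Ici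
    rw [MeasureTheory.integral_add hf12 hind,
      MeasureTheory.integral_add hf1 hf2,
      MeasureTheory.integral_const_mul, MeasureTheory.integral_const_mul, E1 t,
      mul_zero, add_zero, MeasureTheory.integral_indicator measurableSet_Ici,
      MeasureTheory.integral_add hf3.integrableOn hf4.integrableOn,
      MeasureTheory.integral_const_mul, MeasureTheory.integral_const_mul, E2 t,
      KruzhkovAux.setIntegral_Ici_comp_add (fun x => Dt (t, x)) x₀ (c * t)]
  rw [hGoal]
  have hbase : Integrable (fun t => φ (t, x₀ + c * t)) :=
    (hφ.continuous.comp (continuous_id.prodMk (by fun_prop))).integrable_of_hasCompactSupport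
      (KruzhkovAux.hcs_line hφc (fun t => x₀ + c * t))
  set M : ℝ := ∫ t in Ioi (0:ℝ), φ (t, x₀ + c * t) with hMdef
  have hN : Integrable (fun t => ∫ x : ℝ, Dt (t, x))
      ((volume : Measure ℝ).restrict (Ioi (0:ℝ))) := (hresP1 hDt_int).integral_prod_left
  have hV : Integrable (fun t => ∫ y in Ici x₀, Dt (t, y + c * t))
      ((volume : Measure ℝ).restrict (Ioi (0:ℝ))) := by
    simpa using (hresP2 hΦt_int).integral_prod_left
  have hW : Integrable (fun t => (Q - P) * (-φ (t, x₀ + c * t)))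
      ((volume : Measure ℝ).restrict (Ioi (0:ℝ))) :=
    (hbase.neg.const_mul (Q - P)).restrict
  have hsplit : ∫ t in Ioi (0:ℝ), (∫ x : ℝ, (α * Dt (t, x) + P * Dx (t, x)
      + (Ici (x₀ + c * t)).indicator
          (fun x => (β - α) * Dt (t, x) + (Q - P) * Dx (t, x)) x))
      = α * (∫ t in Ioi (0:ℝ), (∫ x : ℝ, Dt (t, x)))
        + ((β - α) * (∫ t in Ioi (0:ℝ), ∫ y in Ici x₀, Dt (t, y + c * t))
            + (Q - P) * (-M)) := by
    have hg1 : Integrable (fun t => α * (∫ x : ℝ, Dt (t, x)))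
        ((volume : Measure ℝ).restrict (Ioi (0:ℝ))) := hN.const_mul α
    have hg2 : Integrable (fun t => (β - α) * (∫ y in Ici x₀, Dt (t, y + c * t)))
        ((volume : Measure ℝ).restrict (Ioi (0:ℝ))) := hV.const_mul _
    have hg23 : Integrable (fun t => (β - α) * (∫ y in Ici x₀, Dt (t, y + c * t))
        + (Q - P) * (-φ (t, x₀ + c * t)))
        ((volume : Measure ℝ).restrict (Ioi (0:ℝ))) := hg2.add hW
    rw [MeasureTheory.integral_congr_ae (MeasureTheory.ae_of_all _ hinner),
      MeasureTheory.integral_add hg1 hg23,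
      MeasureTheory.integral_add hg2 hW,
      MeasureTheory.integral_const_mul, MeasureTheory.integral_const_mul,
      MeasureTheory.integral_const_mul, MeasureTheory.integral_neg, ← hMdef]
  rw [hsplit, hterm0, hM, mul_zero, zero_add]
  -- it remains to check the sign of M * ((β - α) * c + (P - Q))
  have hM0 : (0:ℝ) ≤ M := MeasureTheory.integral_nonneg fun t => hφ0 _
  have hD : 0 ≤ (β - α) * c + (P - Q) := by
    rw [hα, hβ, hP, hQ]
    rcases lt_or_ge k 0 with hk | hk
    · rw [abs_of_pos (by linarith : (0:ℝ) < 0 - k),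
        abs_of_pos (by linarith : (0:ℝ) < 1 - k)]
      unfold sgn
      rw [if_pos (by linarith : (0:ℝ) < 0 - k), if_pos (by linarith : (0:ℝ) < 1 - k)]
      rw [hc]
      nlinarith [hk]
    rcases le_or_gt k 1 with hk1 | hk1
    · have h1 : |(0:ℝ) - k| = k := by rw [zero_sub, abs_neg, abs_of_nonneg hk]
      have h2 : |(1:ℝ) - k| = 1 - k := abs_of_nonneg (by linarith)
      have h3 : sgn ((0:ℝ) - k) * (A 0 - A k) = A k - A 0 := by
        rcases eq_or_lt_of_le hk with h | h
        · simp [sgn, ← h]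
        · unfold sgn
          rw [if_neg (by linarith), if_pos (by linarith)]
          ring
      have h4 : sgn ((1:ℝ) - k) * (A 1 - A k) = A 1 - A k := by
        rcases eq_or_lt_of_le hk1 with h | h
        · simp [sgn, h]
        · unfold sgn
          rw [if_pos (by linarith)]
          ring
      rw [h1, h2, h3, h4, hc]
      have hcv := hconc k ⟨hk, hk1⟩
      nlinarith [hcv]
    · rw [abs_of_neg (by linarith : (0:ℝ) - k < 0),
        abs_of_neg (by linarith : (1:ℝ) - k < 0)]
      unfold sgn
      rw [if_neg (by linarith : ¬ (0:ℝ) < 0 - k), if_pos (by linarith : (0:ℝ) - k < 0),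
        if_neg (by linarith : ¬ (0:ℝ) < 1 - k), if_pos (by linarith : (1:ℝ) - k < 0)]
      rw [hc]
      nlinarith [hk1]
  nlinarith [mul_nonneg hM0 hD]
end

section
/- Let a : ℝ → ℝ be continuous and nonincreasing, let x₀ ∈ ℝ, and let c be any constant with a(1) ≤ c ≤ a(0). Define x₁(t) = x₀ + c t, ρ_t = δ_{x₁(t)}, and the Borel function b̂(t,x) = a(0) for x < x₁(t), b̂(t,x) = c for x = x₁(t), b̂(t,x) = a(1) for x > x₁(t). Then: (i) for every t ≥ 0, b̂(t,x) = a(H(x - x₁(t))) for Lebesgue-almost every x ∈ ℝ; (ii) for every t ≥ 0 the function x ↦ b̂(t,x) is nonincreasing (so it satisfies the one-sided Lipschitz condition ∂ₓ b̂ ≤ 0); and (iii) the measure-valued function ρ solves ∂ₜρ + ∂ₓ(b̂ ρ) = 0 in the sense of distributions on (0,∞) × ℝ, i.e. for every smooth compactly supported test function φ supported in (0,∞) × ℝ, ∫₀^∞ ( ∂ₜφ(t, x₁(t)) + c ∂ₓφ(t, x₁(t)) ) dt = 0. In particular there are infinitely many pairs (ρ, b̂) with b̂ = a(H(· - x₁(t)))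 almost everywhere solving the conservation equation with initial datum δ_{x₀}, one for each admissible speed c ∈ [a(1), a(0)]. -/
open MeasureTheory Set

/-- Nonuniqueness of duality-type solutions for the attractive aggregation equation
with Dirac initial datum: for any admissible speed `c ∈ [a(1), a(0)]`, setting
`x₁(t) = x₀ + c t`, `ρ_t = δ_{x₁(t)}` and `b̂(t,·) = a(0)` left of `x₁(t)`, `= c` at
`x₁(t)`, `= a(1)` right of `x₁(t)`, one has: (i) `b̂(t,·) = a(H(· - x₁(t)))`
Lebesgue-a.e.; (ii) `b̂(t,·)` is nonincreasing (one-sided Lipschitz with constant 0);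
(iii) `ρ` solves `∂ₜρ + ∂ₓ(b̂ρ) = 0` in the sense of distributions on `(0,∞) × ℝ`. -/
theorem nonuniqueness_duality_solutions_dirac
    (a : ℝ → ℝ) (ha : Continuous a) (hmono : Antitone a)
    (x₀ c : ℝ) (hc : a 1 ≤ c) (hc' : c ≤ a 0)
    (x₁ : ℝ → ℝ) (hx₁ : ∀ t, x₁ t = x₀ + c * t)
    (bhat : ℝ → ℝ → ℝ)
    (hb : ∀ t x, bhat t x = if x < x₁ t then a 0 else if x = x₁ t then c else a 1) :
    (∀ t ≥ (0 : ℝ), ∀ᵐ x : ℝ, bhat t x = a (Heaviside (x - x₁ t)))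
    ∧ (∀ t ≥ (0 : ℝ), Antitone (bhat t))
    ∧ (∀ φ : ℝ × ℝ → ℝ, ContDiff ℝ (⊤ : ℕ∞) φ → HasCompactSupport φ →
        tsupport φ ⊆ (Ioi (0 : ℝ)) ×ˢ (univ : Set ℝ) →
        ∫ t in Ioi (0 : ℝ),
            (deriv (fun s => φ (s, x₁ t)) t
              + c * deriv (fun y => φ (t, y)) (x₁ t)) = 0) := by
  refine ⟨?_, ?_, ?_⟩
  · -- (i)
    intro t _
    have h0 : ∀ᵐ x : ℝ, x ≠ x₁ t := by
      refine ae_iff.mpr ?_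
      have : {x : ℝ | ¬ x ≠ x₁ t} = {x₁ t} := by ext x; simp
      rw [this]
      exact Real.volume_singleton
    filter_upwards [h0] with x hx
    rw [hb]
    rcases lt_trichotomy x (x₁ t) with hlt | heq | hgt
    · have : ¬ (0 : ℝ) ≤ x - x₁ t := by linarith
      simp [hlt, Heaviside, this]
    · exact absurd heq hx
    · have h1 : ¬ x < x₁ t := not_lt.2 hgt.le
      have h2 : x ≠ x₁ t := hx
      have h3 : (0 : ℝ) ≤ x - x₁ t := by linarith
      simp [h1, h2, Heaviside, h3]
  · -- (ii)
    intro t _ x y hxy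
    have h10 : a 1 ≤ a 0 := hmono zero_le_one
    rw [hb, hb]
    split_ifs with h1 h2 h3 h4 h5 h6 h7 h8 <;> try linarith
    exact absurd (le_antisymm (hxy.trans h4.le) (not_lt.1 h5)) h6
  · -- (iii)
    intro φ hφ hsupp hsub
    -- the trajectory map
    have hx₁d : ∀ t : ℝ, HasDerivAt x₁ c t := by
      intro t
      have : HasDerivAt (fun t : ℝ => x₀ + c * t) c t := by
        simpa using ((hasDerivAt_id t).const_mul c).const_add x₀
      exact this.congr_of_eventuallyEq (Filter.Eventually.of_forall fun s => (hx₁ s))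
    have hLd : ∀ t : ℝ, HasDerivAt (fun t : ℝ => ((t : ℝ), x₁ t)) (1, c) t := fun t =>
      HasDerivAt.prodMk (hasDerivAt_id t) (hx₁d t)
    have hLc : ContDiff ℝ (⊤ : ℕ∞) (fun t : ℝ => ((t : ℝ), x₁ t)) :=
      contDiff_id.prodMk (by
        have : (fun t : ℝ => x₀ + c * t) = x₁ := by funext s; rw [hx₁ s]
        rw [← this]
        exact contDiff_const.add (contDiff_const.mul contDiff_id))
    set ψ : ℝ → ℝ := fun t => φ (t, x₁ t) with hψdef
    have hψc : ContDiff ℝ (⊤ : ℕ∞) ψ := hφ.comp hLc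
    have hdiff := hφ.differentiable (by simp)
    -- derivative of ψ equals the integrand
    have key : ∀ t : ℝ, deriv ψ t =
        deriv (fun s => φ (s, x₁ t)) t + c * deriv (fun y => φ (t, y)) (x₁ t) := by
      intro t
      have hfd : HasFDerivAt φ (fderiv ℝ φ (t, x₁ t)) (t, x₁ t) :=
        (hdiff (t, x₁ t)).hasFDerivAt
      have hψd : HasDerivAt ψ ((fderiv ℝ φ (t, x₁ t)) (1, c)) t :=
        hfd.comp_hasDerivAt t (hLd t)
      have h1 : HasDerivAt (fun s => φ (s, x₁ t)) ((fderiv ℝ φ (t, x₁ t)) (1, 0)) t :=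
        hfd.comp_hasDerivAt t (HasDerivAt.prodMk (hasDerivAt_id t) (hasDerivAt_const t (x₁ t)))
      have h2 : HasDerivAt (fun y => φ (t, y)) ((fderiv ℝ φ (t, x₁ t)) (0, 1)) (x₁ t) :=
        hfd.comp_hasDerivAt (x₁ t)
          (HasDerivAt.prodMk (hasDerivAt_const (x₁ t) t) (hasDerivAt_id (x₁ t)))
      rw [hψd.deriv, h1.deriv, h2.deriv]
      have : ((1 : ℝ), c) = (1, 0) + c • ((0 : ℝ), (1 : ℝ)) := by
        simp [Prod.ext_iff]
      rw [this, map_add, ContinuousLinearMap.map_smul]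
      simp [smul_eq_mul]
    -- ψ has compact support
    have hLemb : Topology.IsClosedEmbedding (fun t : ℝ => ((t : ℝ), x₁ t)) :=
      Function.LeftInverse.isClosedEmbedding (f := Prod.fst)
        (g := fun t : ℝ => ((t : ℝ), x₁ t))
        (fun t => rfl) continuous_fst hLc.continuous
    have hψs : HasCompactSupport ψ := hsupp.comp_isClosedEmbedding hLemb
    -- ψ vanishes at 0
    have hψ0 : ψ 0 = 0 := by
      show φ (0, x₁ 0) = 0
      apply image_eq_zero_of_notMem_tsupport
      intro hmem
      have := hsub hmem
      simp only [mem_prod, mem_Ioi] at this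
      exact lt_irrefl 0 this.1
    have := hψs.integral_Ioi_deriv_eq (hψc.of_le (by simp)) 0
    calc ∫ t in Ioi (0 : ℝ),
            (deriv (fun s => φ (s, x₁ t)) t + c * deriv (fun y => φ (t, y)) (x₁ t))
        = ∫ t in Ioi (0 : ℝ), deriv ψ t := by
          refine setIntegral_congr_fun measurableSet_Ioi fun t _ => ?_
          rw [key t]
      _ = - ψ 0 := this
      _ = 0 := by rw [hψ0, neg_zero]
end

section
/- Let u : ℝ → ℝ be nondecreasing and right-continuous, with associated Lebesgue–Stieltjes measure μ_u, and denote by u⁻(x) the left limit of u at x. Let A : ℝ → ℝ be continuously differentiable with A' = a. Define the Borel function b̂ : ℝ → ℝ by b̂(x) = (A(u(x)) - A(u⁻(x)))/(u(x) - u⁻(x)) if u(x) ≠ u⁻(x), and b̂(x) = a(u(x)) if u(x) = u⁻(x). Then: (i) for every smooth compactly supported test function φ : ℝ → ℝ, ∫_ℝ A(u(x)) φ'(x) dx = - ∫_ℝ φ(x) b̂(x) dμ_u(x); that is, the distributional derivative of A∘u is the measure with density b̂ with respect to μ_u; and (ii) b̂(x) = a(u(x)) for Lebesgue-almost every x ∈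 ℝ. -/
open MeasureTheory Set Function

namespace ChainRuleSU

noncomputable def ginv (f : StieltjesFunction ℝ) (s t : ℝ) (y : ℝ) : ℝ :=
  sInf ({x | min y (f t) ≤ f x} ∩ Ici s)

variable (f : StieltjesFunction ℝ) {s t : ℝ}

lemma ginv_nonempty (hst : s ≤ t) (y : ℝ) :
    ({x | min y (f t) ≤ f x} ∩ Ici s).Nonempty :=
  ⟨t, by simpa using min_le_right y (f t), hst⟩

lemma ginv_bddBelow (y : ℝ) : BddBelow ({x | min y (f t) ≤ f x} ∩ Ici s) :=
  ⟨s, fun _ hx => hx.2⟩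

lemma ginv_mono (hst : s ≤ t) : Monotone (ginv f s t) := by
  intro y y' h
  exact csInf_le_csInf (ginv_bddBelow f _)
    (ginv_nonempty f hst y')
    (inter_subset_inter_left _ fun x hx =>
      le_trans (min_le_min h le_rfl) hx)

lemma ginv_set_eq {y : ℝ} (hy : y ∈ Ioc (f s) (f t)) :
    {x | min y (f t) ≤ f x} ∩ Ici s = {x | y ≤ f x} := by
  have hmin : min y (f t) = y := min_eq_left hy.2
  ext z
  simp only [mem_inter_iff, mem_setOf_eq, mem_Ici, hmin, and_iff_left_iff_imp]
  intro hz
  by_contra h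
  push_neg at h
  exact absurd (hz.trans (f.mono h.le)) (not_le.2 hy.1)

lemma ginv_le_iff (hst : s ≤ t) {y : ℝ} (hy : y ∈ Ioc (f s) (f t)) (x : ℝ) :
    ginv f s t y ≤ x ↔ y ≤ f x := by
  constructor
  · intro h
    have key : ∀ r ∈ Ioi x, y ≤ f r := by
      intro r hr
      obtain ⟨z, hz, hzr⟩ := exists_lt_of_csInf_lt
        ((ginv_nonempty f hst y)) (lt_of_le_of_lt h hr)
      rw [ginv_set_eq f hy] at hz
      exact hz.trans (f.mono hzr.le)
    calc y ≤ ⨅ r : Ioi x, f r := le_ciInf fun r => key r r.2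
    _ = f x := f.iInf_Ioi_eq x
  · intro h
    apply csInf_le (ginv_bddBelow f y)
    rw [ginv_set_eq f hy]
    exact h

lemma ginv_mem (hst : s ≤ t) {y : ℝ} (hy : y ∈ Ioc (f s) (f t)) :
    ginv f s t y ∈ Ioc s t := by
  constructor
  · by_contra h
    push_neg at h
    exact absurd ((ginv_le_iff f hst hy s).1 h) (not_le.2 hy.1)
  · exact (ginv_le_iff f hst hy t).2 hy.2

lemma le_apply_ginv (hst : s ≤ t) {y : ℝ} (hy : y ∈ Ioc (f s) (f t)) :
    y ≤ f (ginv f s t y) :=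
  (ginv_le_iff f hst hy _).1 le_rfl

lemma leftLim_ginv_le (hst : s ≤ t) {y : ℝ} (hy : y ∈ Ioc (f s) (f t)) :
    leftLim f (ginv f s t y) ≤ y := by
  refine le_of_tendsto (f.mono.tendsto_leftLim (ginv f s t y)) ?_
  filter_upwards [self_mem_nhdsWithin] with z (hz : z < ginv f s t y)
  by_contra h
  push_neg at h
  exact absurd ((ginv_le_iff f hst hy z).2 h.le) (not_le.2 hz)

lemma ginv_eq_of_jump (hst : s ≤ t) {x y : ℝ} (hx : x ∈ Ioc s t)
    (hy : y ∈ Ioc (leftLim f x) (f x)) : ginv f s t y = x := by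
  have hyI : y ∈ Ioc (f s) (f t) :=
    ⟨lt_of_le_of_lt (f.mono.le_leftLim hx.1) hy.1, hy.2.trans (f.mono hx.2)⟩
  refine le_antisymm ((ginv_le_iff f hst hyI x).2 hy.2) ?_
  by_contra h
  push_neg at h
  exact absurd (le_apply_ginv f hst hyI) (not_le.2 ((f.mono.le_leftLim h).trans_lt hy.1))

lemma map_ginv (hst : s ≤ t) :
    Measure.map (ginv f s t) (volume.restrict (Ioc (f s) (f t))) =
      f.measure.restrict (Ioc s t) := by
  have hg : Measurable (ginv f s t) := (ginv_mono f hst).measurable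
  have hft : f s ≤ f t := f.mono hst
  haveI : IsFiniteMeasure (Measure.map (ginv f s t) (volume.restrict (Ioc (f s) (f t)))) := by
    constructor
    rw [Measure.map_apply hg MeasurableSet.univ, preimage_univ,
      Measure.restrict_apply_univ, Real.volume_Ioc]
    exact ENNReal.ofReal_lt_top
  refine Measure.ext_of_Ioc_finite _ _ ?_ (fun a b hab => ?_)
  · rw [Measure.map_apply hg MeasurableSet.univ, preimage_univ,
      Measure.restrict_apply_univ, Real.volume_Ioc,
      Measure.restrict_apply_univ, f.measure_Ioc]
  · rw [Measure.map_apply hg measurableSet_Ioc,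
      Measure.restrict_apply (hg measurableSet_Ioc),
      Measure.restrict_apply measurableSet_Ioc]
    have hset : ginv f s t ⁻¹' (Ioc a b) ∩ Ioc (f s) (f t)
        = Ioc (f a) (f b) ∩ Ioc (f s) (f t) := by
      ext y
      simp only [mem_inter_iff, mem_preimage, mem_Ioc]
      constructor
      · rintro ⟨⟨h1, h2⟩, hy⟩
        have hy' : y ∈ Ioc (f s) (f t) := hy
        refine ⟨⟨?_, (ginv_le_iff f hst hy' b).1 h2⟩, hy⟩
        by_contra h
        push_neg at h
        exact absurd ((ginv_le_iff f hst hy' a).2 h) (not_le.2 h1)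
      · rintro ⟨⟨h1, h2⟩, hy⟩
        have hy' : y ∈ Ioc (f s) (f t) := hy
        refine ⟨⟨?_, (ginv_le_iff f hst hy' b).2 h2⟩, hy⟩
        by_contra h
        push_neg at h
        exact absurd ((ginv_le_iff f hst hy' a).1 h) (not_le.2 h1)
    rw [hset, Ioc_inter_Ioc, Ioc_inter_Ioc, Real.volume_Ioc, f.measure_Ioc,
      f.mono.map_min, f.mono.map_max]






variable {A a bhat : ℝ → ℝ}

lemma measurable_bhat (ha : Continuous a) (hA : Continuous A)
    (hb : ∀ x, bhat x =
      if f x ≠ leftLim f x then (A (f x) - A (leftLim f x)) / (f x - leftLim f x)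
      else a (f x)) : Measurable bhat := by
  have hf : Measurable f := f.mono.measurable
  have hl : Measurable (leftLim f) := f.mono.leftLim.measurable
  have : bhat = fun x =>
      if f x ≠ leftLim f x then (A (f x) - A (leftLim f x)) / (f x - leftLim f x)
      else a (f x) := funext hb
  rw [this]
  exact Measurable.ite (measurableSet_eq_fun hf hl).compl
    (((hA.measurable.comp hf).sub (hA.measurable.comp hl)).div (hf.sub hl))
    (ha.measurable.comp hf)

lemma bhat_eq_a (hA' : ∀ x, HasDerivAt A (a x) x)
    (hb : ∀ x, bhat x =
      if f x ≠ leftLim f x then (A (f x) - A (leftLim f x)) / (f x - leftLim f x)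
      else a (f x)) (x : ℝ) :
    ∃ c ∈ Icc (leftLim f x) (f x), bhat x = a c := by
  have hle : leftLim f x ≤ f x := f.mono.leftLim_le le_rfl
  by_cases h : f x = leftLim f x
  · refine ⟨f x, ⟨h.ge, le_rfl⟩, ?_⟩
    rw [hb x, if_neg (by simp [h])]
  · have hlt : leftLim f x < f x := lt_of_le_of_ne hle (Ne.symm h)
    have hAc : Continuous A := Differentiable.continuous (fun y => (hA' y).differentiableAt)
    obtain ⟨c, hc, hc'⟩ := exists_hasDerivAt_eq_slope A a hlt
      hAc.continuousOn (fun y _ => hA' y)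
    exact ⟨c, Ioo_subset_Icc_self hc, by rw [hb x, if_pos h, ← hc']⟩

lemma bhat_bound (hA' : ∀ x, HasDerivAt A (a x) x) (ha : Continuous a)
    (hb : ∀ x, bhat x =
      if f x ≠ leftLim f x then (A (f x) - A (leftLim f x)) / (f x - leftLim f x)
      else a (f x)) {s t : ℝ} (hst : s ≤ t) :
    ∃ C, ∀ x ∈ Ioc s t, ‖bhat x‖ ≤ C := by
  obtain ⟨C, hC⟩ := (isCompact_Icc (a := f s) (b := f t)).exists_bound_of_continuousOn
    ha.continuousOn
  refine ⟨C, fun x hx => ?_⟩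
  obtain ⟨c, hc, hceq⟩ := bhat_eq_a f hA' hb x
  rw [hceq]
  exact hC c ⟨(f.mono.le_leftLim hx.1).trans hc.1, hc.2.trans (f.mono hx.2)⟩


section KeyLemma


section
variable (f : StieltjesFunction ℝ) {A a bhat : ℝ → ℝ}

lemma key (hA' : ∀ x, HasDerivAt A (a x) x) (ha : Continuous a)
    (hb : ∀ x, bhat x =
      if f x ≠ leftLim f x then (A (f x) - A (leftLim f x)) / (f x - leftLim f x)
      else a (f x)) {s t : ℝ} (hst : s ≤ t) :
    ∫ x in Ioc s t, bhat x ∂f.measure = A (f t) - A (f s) := by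
  have hAc : Continuous A := Differentiable.continuous (fun y => (hA' y).differentiableAt)
  have hbm : Measurable bhat := measurable_bhat f ha hAc hb
  have hg : Measurable (ginv f s t) := (ginv_mono f hst).measurable
  have hft : f s ≤ f t := f.mono hst
  have step1 : ∫ x in Ioc s t, bhat x ∂f.measure
      = ∫ y in Ioc (f s) (f t), bhat (ginv f s t y) := by
    rw [← map_ginv f hst, integral_map hg.aemeasurable hbm.aestronglyMeasurable]
  -- jump set
  set S : Set ℝ := {x | leftLim f x ≠ f x} ∩ Ioc s t with hS_def
  have hS : S.Countable := f.countable_leftLim_ne.mono inter_subset_left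
  haveI : Countable ↥S := hS.to_subtype
  set E : Set ℝ := ⋃ x : S, Ioc (leftLim f (x : ℝ)) (f (x : ℝ)) with hE_def
  have hEsub : E ⊆ Ioc (f s) (f t) := by
    rintro y hy
    obtain ⟨x, hyx⟩ := mem_iUnion.1 hy
    exact ⟨(f.mono.le_leftLim x.2.2.1).trans_lt hyx.1, hyx.2.trans (f.mono x.2.2.2)⟩
  have hEmeas : MeasurableSet E := MeasurableSet.iUnion fun _ => measurableSet_Ioc
  have hdisj : Pairwise (Disjoint on fun x : S => Ioc (leftLim f (x : ℝ)) (f (x : ℝ))) := by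
    intro x x' hne
    have hne' : (x : ℝ) ≠ (x' : ℝ) := fun h => hne (Subtype.ext h)
    rcases hne'.lt_or_gt with h | h
    · exact Ioc_disjoint_Ioc.2 (le_max_of_le_right (min_le_of_left_le (f.mono.le_leftLim h)))
    · exact Ioc_disjoint_Ioc.2 (le_max_of_le_left (min_le_of_right_le (f.mono.le_leftLim h)))
  obtain ⟨C, hC⟩ := bhat_bound f hA' ha hb hst
  have hint : IntegrableOn (fun y => bhat (ginv f s t y)) (Ioc (f s) (f t)) volume := by
    refine Integrable.mono' (g := fun _ => C) (integrableOn_const (ne_of_lt ?_))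
      (hbm.comp hg).aestronglyMeasurable ?_
    · rw [Real.volume_Ioc]; exact ENNReal.ofReal_lt_top
    · filter_upwards [ae_restrict_mem measurableSet_Ioc] with y hy
      exact hC _ (ginv_mem f hst hy)
  have hinta : IntegrableOn a (Ioc (f s) (f t)) volume := ha.integrableOn_Ioc
  have hsplit : ∀ (h : ℝ → ℝ), IntegrableOn h (Ioc (f s) (f t)) volume →
      ∫ y in Ioc (f s) (f t), h y = (∫ y in E, h y) + ∫ y in Ioc (f s) (f t) \ E, h y := by
    intro h hh
    rw [← setIntegral_union disjoint_sdiff_right (measurableSet_Ioc.diff hEmeas)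
      (hh.mono_set hEsub) (hh.mono_set diff_subset), union_diff_cancel hEsub]
  have hFTC : ∀ u v : ℝ, u ≤ v → ∫ y in Ioc u v, a y = A v - A u := by
    intro u v huv
    rw [← intervalIntegral.integral_of_le huv]
    exact intervalIntegral.integral_eq_sub_of_hasDerivAt (fun y _ => hA' y)
      (ha.intervalIntegrable _ _)
  have hEeq : ∫ y in E, bhat (ginv f s t y) = ∫ y in E, a y := by
    rw [hE_def, integral_iUnion (fun _ => measurableSet_Ioc) hdisj (hint.mono_set hEsub),
      integral_iUnion (fun _ => measurableSet_Ioc) hdisj (hinta.mono_set hEsub)]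
    refine tsum_congr fun x => ?_
    have hxjump : leftLim f (x : ℝ) ≠ f (x : ℝ) := x.2.1
    have hxI : (x : ℝ) ∈ Ioc s t := x.2.2
    have hll : leftLim f (x : ℝ) ≤ f (x : ℝ) := f.mono.leftLim_le le_rfl
    have h1 : ∫ y in Ioc (leftLim f (x : ℝ)) (f (x : ℝ)), bhat (ginv f s t y)
        = ∫ _y in Ioc (leftLim f (x : ℝ)) (f (x : ℝ)), bhat (x : ℝ) :=
      setIntegral_congr_fun measurableSet_Ioc fun y hy => by
        rw [ginv_eq_of_jump f hst hxI hy]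
    rw [h1, setIntegral_const, Real.volume_real_Ioc_of_le hll,
      smul_eq_mul, hFTC _ _ hll, hb (x : ℝ), if_pos (Ne.symm hxjump), mul_comm,
      div_mul_cancel₀ _ (sub_ne_zero.2 (Ne.symm hxjump))]
  have hcompl : ∫ y in Ioc (f s) (f t) \ E, bhat (ginv f s t y)
      = ∫ y in Ioc (f s) (f t) \ E, a y := by
    have hLnull : volume (leftLim f '' {x | leftLim f x ≠ f x}) = 0 :=
      (f.countable_leftLim_ne.image _).measure_zero _
    refine setIntegral_congr_ae (measurableSet_Ioc.diff hEmeas) ?_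
    filter_upwards [measure_eq_zero_iff_ae_notMem.1 hLnull] with y hyL hy
    obtain ⟨hyI, hyE⟩ := hy
    have hxm : ginv f s t y ∈ Ioc s t := ginv_mem f hst hyI
    have h1 : leftLim f (ginv f s t y) ≤ y := leftLim_ginv_le f hst hyI
    have h2 : y ≤ f (ginv f s t y) := le_apply_ginv f hst hyI
    by_cases hj : leftLim f (ginv f s t y) = f (ginv f s t y)
    · have hyfx : y = f (ginv f s t y) := le_antisymm h2 (by rw [← hj]; exact h1)
      rw [hb (ginv f s t y), if_neg (not_ne_iff.2 hj.symm), ← hyfx]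
    · have hymem : y ≠ leftLim f (ginv f s t y) := fun h => hyL ⟨ginv f s t y, hj, h.symm⟩
      have hlt : leftLim f (ginv f s t y) < y := lt_of_le_of_ne h1 (Ne.symm hymem)
      exact absurd (mem_iUnion.2 ⟨(⟨ginv f s t y, hj, hxm⟩ : ↥S), hlt, h2⟩ : y ∈ E) hyE
  rw [step1, hsplit _ hint, hEeq, hcompl, ← hsplit _ hinta, hFTC _ _ hft]

end
end KeyLemma
end ChainRuleSU

open ChainRuleSU in
/-- Chain rule for `A ∘ u` when `u` is nondecreasing and right-continuous (given as a
Stieltjes function `f`, with Lebesgue–Stieltjes measure `μ_u = f.measure`) and `A` is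
`C¹` with `A' = a`: the distributional derivative of `A ∘ u` is the measure with
density `b̂` with respect to `μ_u`, where `b̂` is the averaged slope of `A` across jumps
of `u` and `a(u)` elsewhere; moreover `b̂ = a ∘ u` Lebesgue-almost everywhere. -/
theorem chain_rule_stieltjes_universal_representative
    (f : StieltjesFunction ℝ) (A a : ℝ → ℝ)
    (hA : ContDiff ℝ 1 A) (hA' : ∀ x, HasDerivAt A (a x) x)
    (bhat : ℝ → ℝ)
    (hb : ∀ x, bhat x =
      if f x ≠ leftLim f x then (A (f x) - A (leftLim f x)) / (f x - leftLim f x)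
      else a (f x)) :
    (∀ φ : ℝ → ℝ, ContDiff ℝ (⊤ : ℕ∞) φ → HasCompactSupport φ →
      ∫ x : ℝ, A (f x) * deriv φ x = - ∫ x : ℝ, φ x * bhat x ∂ f.measure)
    ∧ (∀ᵐ x : ℝ, bhat x = a (f x)) := by
  have ha : Continuous a := by
    have hd : deriv A = a := funext fun x => (hA' x).deriv
    rw [← hd]
    exact hA.continuous_deriv le_rfl
  have hAc : Continuous A := Differentiable.continuous (fun y => (hA' y).differentiableAt)
  have hbm : Measurable bhat := measurable_bhat f ha hAc hb
  constructor
  · intro φ hφ hφc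
    have hφd : Differentiable ℝ φ := hφ.differentiable (by simp)
    have hφ' : Continuous (deriv φ) := hφ.continuous_deriv (by simp)
    obtain ⟨r₀, hr₀⟩ : ∃ r₀ : ℝ, tsupport φ ⊆ Icc (-r₀) r₀ := by
      obtain ⟨r₀, hr₀⟩ := hφc.isBounded.subset_closedBall 0
      exact ⟨r₀, by simpa [Real.closedBall_eq_Icc] using hr₀⟩
    set r : ℝ := |r₀| + 1 with hrdef
    have hsupp : tsupport φ ⊆ Icc (-|r₀|) |r₀| :=
      hr₀.trans (Icc_subset_Icc (neg_le_neg (le_abs_self r₀)) (le_abs_self r₀))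
    have habs : (0:ℝ) ≤ |r₀| := abs_nonneg r₀
    have hrr : -r ≤ r := by simp only [hrdef]; linarith
    have hIc : ∀ x : ℝ, x ∉ Ioc (-r) r → x ∉ Icc (-|r₀|) |r₀| := by
      intro x hx hx'
      exact hx ⟨lt_of_lt_of_le (by simp only [hrdef]; linarith) hx'.1,
        hx'.2.trans (by simp only [hrdef]; linarith)⟩
    have hφ0 : ∀ x : ℝ, x ∉ Icc (-|r₀|) |r₀| → φ x = 0 := fun x hx =>
      image_eq_zero_of_notMem_tsupport (fun h => hx (hsupp h))
    have hdφ0 : ∀ x : ℝ, x ∉ Icc (-|r₀|) |r₀| → deriv φ x = 0 := by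
      intro x hx
      by_contra h
      exact hx (hsupp (support_deriv_subset (mem_support.2 h)))
    have hφr : φ r = 0 := hφ0 r (fun h => by simp only [hrdef] at h; linarith [h.2])
    have hφmr : φ (-r) = 0 := hφ0 (-r) (fun h => by
      simp only [hrdef] at h; have := h.1; linarith)
    -- finiteness
    haveI hfin1 : IsFiniteMeasure (volume.restrict (Ioc (-r) r)) :=
      ⟨by rw [Measure.restrict_apply_univ, Real.volume_Ioc]; exact ENNReal.ofReal_lt_top⟩
    haveI hfin2 : IsFiniteMeasure (f.measure.restrict (Ioc (-r) r)) :=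
      ⟨by rw [Measure.restrict_apply_univ, f.measure_Ioc]; exact ENNReal.ofReal_lt_top⟩
    obtain ⟨C, hC⟩ := bhat_bound f hA' ha hb hrr
    have hC0 : 0 ≤ C := le_trans (norm_nonneg _) (hC r ⟨by simp only [hrdef]; linarith, le_rfl⟩)
    obtain ⟨D, hD⟩ := (isCompact_Icc (a := -r) (b := r)).exists_bound_of_continuousOn
      hφ'.continuousOn
    -- step A : restrict the integral
    have stepA : ∫ x : ℝ, A (f x) * deriv φ x
        = ∫ x in Ioc (-r) r, A (f x) * deriv φ x := by
      refine (setIntegral_eq_integral_of_forall_compl_eq_zero fun x hx => ?_).symm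
      rw [hdφ0 x (hIc x hx), mul_zero]
    -- integrability of the two pieces
    have hfA : Measurable fun x : ℝ => A (f x) := hAc.measurable.comp f.mono.measurable
    have hi1 : IntegrableOn (fun x => deriv φ x * A (f r)) (Ioc (-r) r) volume :=
      (hφ'.mul continuous_const).integrableOn_Ioc
    have hi2 : IntegrableOn (fun x => deriv φ x * (A (f r) - A (f x))) (Ioc (-r) r)
        volume := by
      obtain ⟨K, hK⟩ := (isCompact_Icc (a := f (-r)) (b := f r)).exists_bound_of_continuousOn
        hAc.continuousOn
      refine Integrable.mono' (g := fun _ => D * (‖A (f r)‖ + K))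
        (integrableOn_const (ne_of_lt (by rw [Real.volume_Ioc]; exact ENNReal.ofReal_lt_top)))
        ((hφ'.measurable.mul (measurable_const.sub hfA)).aestronglyMeasurable) ?_
      filter_upwards [ae_restrict_mem measurableSet_Ioc] with x hx
      have h1 : ‖deriv φ x‖ ≤ D := hD x ⟨hx.1.le, hx.2⟩
      have h2 : ‖A (f r) - A (f x)‖ ≤ ‖A (f r)‖ + K :=
        (norm_sub_le _ _).trans (add_le_add le_rfl (hK _ ⟨f.mono hx.1.le, f.mono hx.2⟩))
      calc ‖deriv φ x * (A (f r) - A (f x))‖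
          = ‖deriv φ x‖ * ‖A (f r) - A (f x)‖ := norm_mul _ _
        _ ≤ D * (‖A (f r)‖ + K) :=
            mul_le_mul h1 h2 (norm_nonneg _) ((norm_nonneg _).trans h1)
    -- split pointwise
    have stepB : ∫ x in Ioc (-r) r, A (f x) * deriv φ x
        = (∫ x in Ioc (-r) r, deriv φ x * A (f r))
          - ∫ x in Ioc (-r) r, deriv φ x * (A (f r) - A (f x)) := by
      rw [← integral_sub hi1 hi2]
      exact setIntegral_congr_fun measurableSet_Ioc fun x _ => by ring
    -- first piece is zero
    have e1 : ∫ x in Ioc (-r) r, deriv φ x * A (f r) = 0 := by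
      rw [integral_mul_const]
      have : ∫ x in Ioc (-r) r, deriv φ x = φ r - φ (-r) := by
        rw [← intervalIntegral.integral_of_le hrr]
        exact intervalIntegral.integral_deriv_eq_sub (fun x _ => hφd x)
          (hφ'.intervalIntegrable _ _)
      rw [this, hφr, hφmr, sub_zero, zero_mul]
    -- Fubini on the second piece
    set F : ℝ → ℝ → ℝ := fun x u => deriv φ x * (Ioc x r).indicator bhat u with hF_def
    have hFm : Measurable (uncurry F) := by
      have : uncurry F = fun p : ℝ × ℝ =>
          deriv φ p.1 * (if p.1 < p.2 ∧ p.2 ≤ r then bhat p.2 else 0) := by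
        funext p
        simp [uncurry, hF_def, indicator_apply, mem_Ioc]
      rw [this]
      refine (hφ'.measurable.comp measurable_fst).mul
        (Measurable.ite ?_ (hbm.comp measurable_snd) measurable_const)
      exact (measurableSet_lt measurable_fst measurable_snd).inter
        (measurable_snd measurableSet_Iic)
    have hFint : Integrable (uncurry F)
        ((volume.restrict (Ioc (-r) r)).prod (f.measure.restrict (Ioc (-r) r))) := by
      refine Integrable.mono' (g := fun _ => D * C) (integrable_const _)
        hFm.aestronglyMeasurable ?_
      rw [Measure.prod_restrict]
      filter_upwards [ae_restrict_mem (measurableSet_Ioc.prod measurableSet_Ioc)] with p hp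
      have h1 : ‖deriv φ p.1‖ ≤ D := hD p.1 ⟨hp.1.1.le, hp.1.2⟩
      have h2 : ‖(Ioc p.1 r).indicator bhat p.2‖ ≤ C :=
        (norm_indicator_le_norm_self bhat p.2).trans (hC p.2 hp.2)
      calc ‖uncurry F p‖ = ‖deriv φ p.1‖ * ‖(Ioc p.1 r).indicator bhat p.2‖ := norm_mul _ _
        _ ≤ D * C := mul_le_mul h1 h2 (norm_nonneg _) ((norm_nonneg _).trans h1)
    have e2 : ∫ x in Ioc (-r) r, deriv φ x * (A (f r) - A (f x))
        = ∫ u in Ioc (-r) r, φ u * bhat u ∂f.measure := by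
      have h0 : ∀ x ∈ Ioc (-r) r, deriv φ x * (A (f r) - A (f x))
          = ∫ u in Ioc (-r) r, F x u ∂f.measure := by
        intro x hx
        rw [hF_def]
        simp only
        rw [integral_const_mul, setIntegral_indicator measurableSet_Ioc, Ioc_inter_Ioc,
          max_eq_right hx.1.le, min_self, key f hA' ha hb hx.2]
      have h1 : ∀ u ∈ Ioc (-r) r, (∫ x in Ioc (-r) r, F x u) = φ u * bhat u := by
        intro u hu
        have hind : (fun x => F x u) = (Iio u).indicator (fun x => deriv φ x * bhat u) := by
          funext x
          by_cases hxu : x < u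
          · have : u ∈ Ioc x r := ⟨hxu, hu.2⟩
            simp [hF_def, indicator_of_mem this, indicator_of_mem (mem_Iio.2 hxu)]
          · have : u ∉ Ioc x r := fun h => hxu h.1
            simp [hF_def, indicator_of_notMem this,
              indicator_of_notMem (fun h : x ∈ Iio u => hxu h)]
        rw [hind, setIntegral_indicator measurableSet_Iio]
        have hset : Ioc (-r) r ∩ Iio u = Ioo (-r) u := by
          ext z
          simp only [mem_inter_iff, mem_Ioc, mem_Iio, mem_Ioo]
          exact ⟨fun h => ⟨h.1.1, h.2⟩, fun h => ⟨⟨h.1, h.2.le.trans hu.2⟩, h.2⟩⟩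
        rw [hset, integral_mul_const, ← integral_Ioc_eq_integral_Ioo,
          ← intervalIntegral.integral_of_le (hu.1.le)]
        rw [intervalIntegral.integral_deriv_eq_sub (fun x _ => hφd x)
          (hφ'.intervalIntegrable _ _), hφmr, sub_zero]
      rw [setIntegral_congr_fun measurableSet_Ioc h0]
      rw [integral_integral_swap hFint]
      exact setIntegral_congr_fun measurableSet_Ioc h1
    have e3 : ∫ u in Ioc (-r) r, φ u * bhat u ∂f.measure
        = ∫ u, φ u * bhat u ∂f.measure :=
      setIntegral_eq_integral_of_forall_compl_eq_zero fun u hu => by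
        rw [hφ0 u (hIc u hu), zero_mul]
    rw [stepA, stepB, e1, e2, e3, zero_sub]
  · have hsub : {x | bhat x ≠ a (f x)} ⊆ {x | leftLim f x ≠ f x} := by
      intro x hx
      by_contra h
      simp only [mem_setOf_eq, not_ne_iff] at h
      exact hx (by rw [hb x, if_neg (not_ne_iff.2 h.symm)])
    rw [ae_iff]
    exact measure_mono_null hsub (f.countable_leftLim_ne.measure_zero _)
end

section
/- Let n ≥ 1, let A : ℝ → ℝ be continuous, let m₁, ..., m_n > 0 with M₀ = 0 and M_i = m₁ + ... + m_i, and set v_i = (A(M_i) - A(M_{i-1}))/m_i for 1 ≤ i ≤ n. Let x₁⁰ < ... < x_n⁰ and define x_i(t) = x_i⁰ + v_i t, and let T > 0 be such that x₁(t) < x₂(t) < ... < x_n(t) for all t ∈ [0,T). Define the measures ρ_t = Σ_{i=1}^n m_i δ_{x_i(t)} and q_t = Σ_{i=1}^n (A(M_i) - A(M_{i-1})) δ_{x_i(t)} (so that q_t is the distributional x-derivative of A(u(t,·)) with u(t,x) = Σ_j m_j H(x - x_j(t))). Then ∂ₜρ + ∂ₓ q = 0 holds in the sense of distributions on (0,T)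 × ℝ: for every smooth compactly supported test function φ supported in (0,T) × ℝ, Σ_{i=1}^n ∫₀^T ( m_i ∂ₜφ(t, x_i(t)) + (A(M_i) - A(M_{i-1})) ∂ₓφ(t, x_i(t)) ) dt = 0. -/
open MeasureTheory Set Finset

/-- Aggregate dynamics: for atomic data `ρ_t = Σ_{i<n} m_i δ_{X_i(t)}` where each
aggregate travels with the constant velocity `v_i = (A(M_{i+1}) - A(M_i))/m_i`
(`M_k = Σ_{j<k} m_j`), and flux `q_t = Σ_{i<n} (A(M_{i+1}) - A(M_i)) δ_{X_i(t)}`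
(the distributional `x`-derivative of `A(u(t,·))`), the continuity equation
`∂ₜρ + ∂ₓ q = 0` holds in the sense of distributions on `(0,T) × ℝ`, as long as the
aggregates remain ordered on `[0,T)`. -/
theorem aggregates_continuity_equation
    (n : ℕ) (hn : 1 ≤ n)
    (A : ℝ → ℝ) (hA : Continuous A)
    (m : ℕ → ℝ) (hm : ∀ i < n, 0 < m i)
    (M : ℕ → ℝ) (hM : ∀ k, M k = ∑ j ∈ Finset.range k, m j)
    (v : ℕ → ℝ) (hv : ∀ i < n, v i = (A (M (i + 1)) - A (M i)) / m i)
    (x0 : ℕ → ℝ) (hx0 : ∀ i j, i < j → j < n → x0 i < x0 j)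
    (X : ℕ → ℝ → ℝ) (hX : ∀ i t, X i t = x0 i + v i * t)
    (T : ℝ) (hT : 0 < T)
    (horder : ∀ t ∈ Ico (0 : ℝ) T, ∀ i j, i < j → j < n → X i t < X j t) :
    ∀ φ : ℝ × ℝ → ℝ, ContDiff ℝ (⊤ : ℕ∞) φ → HasCompactSupport φ →
      tsupport φ ⊆ (Ioo (0 : ℝ) T) ×ˢ (univ : Set ℝ) →
      ∑ i ∈ Finset.range n, ∫ t in Ioo (0 : ℝ) T,
          (m i * deriv (fun s => φ (s, X i t)) t
            + (A (M (i + 1)) - A (M i)) * deriv (fun y => φ (t, y)) (X i t)) = 0 := by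
  intro φ hφ hφc hsupp
  have hφ1 : ContDiff ℝ 1 φ := hφ.of_le (by simp)
  have hφd : Differentiable ℝ φ := hφ1.differentiable one_ne_zero
  apply Finset.sum_eq_zero
  intro i hi
  rw [Finset.mem_range] at hi
  have hmi := hm i hi
  have hmv : A (M (i + 1)) - A (M i) = m i * v i := by
    rw [hv i hi]; field_simp
  -- the curve t ↦ (t, X i t)
  have hcurve : ∀ t : ℝ, HasDerivAt (fun s => ((s, X i s) : ℝ × ℝ)) (1, v i) t := by
    intro t
    have h1 : HasDerivAt (fun s : ℝ => s) 1 t := hasDerivAt_id t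
    have h2 : HasDerivAt (fun s : ℝ => X i s) (v i) t := by
      have : HasDerivAt (fun s : ℝ => x0 i + v i * s) (v i) t := by
        simpa using ((hasDerivAt_id t).const_mul (v i)).const_add (x0 i)
      refine this.congr_of_eventuallyEq ?_
      filter_upwards with s using (hX i s)
    exact h1.prodMk h2
  -- derivative of g t = φ (t, X i t)
  set g : ℝ → ℝ := fun t => φ (t, X i t) with hg
  set g' : ℝ → ℝ := fun t => fderiv ℝ φ (t, X i t) (1, v i) with hg'
  have hgd : ∀ t : ℝ, HasDerivAt g (g' t) t := fun t =>
    (hφd (t, X i t)).hasFDerivAt.comp_hasDerivAt t (hcurve t)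
  -- partial derivatives
  have hpart : ∀ t : ℝ,
      m i * deriv (fun s => φ (s, X i t)) t
        + (A (M (i + 1)) - A (M i)) * deriv (fun y => φ (t, y)) (X i t)
      = m i * g' t := by
    intro t
    have ht : HasDerivAt (fun s => φ (s, X i t)) (fderiv ℝ φ (t, X i t) (1, 0)) t := by
      have hc : HasDerivAt (fun s : ℝ => ((s, X i t) : ℝ × ℝ)) ((1 : ℝ), (0 : ℝ)) t :=
        (hasDerivAt_id t).prodMk (hasDerivAt_const t _)
      exact (hφd (t, X i t)).hasFDerivAt.comp_hasDerivAt t hc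
    have hx : HasDerivAt (fun y => φ (t, y)) (fderiv ℝ φ (t, X i t) (0, 1)) (X i t) := by
      have hc : HasDerivAt (fun y : ℝ => ((t, y) : ℝ × ℝ)) ((0 : ℝ), (1 : ℝ)) (X i t) :=
        (hasDerivAt_const _ t).prodMk (hasDerivAt_id _)
      exact (hφd (t, X i t)).hasFDerivAt.comp_hasDerivAt _ hc
    rw [ht.deriv, hx.deriv, hmv]
    have hvec : ((1 : ℝ), v i) = ((1 : ℝ), (0 : ℝ)) + v i • ((0 : ℝ), (1 : ℝ)) := by
      simp [Prod.ext_iff]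
    simp only [hg', hvec, map_add, _root_.map_smul, smul_eq_mul]
    ring
  -- continuity of g'
  have hgc : Continuous g' := by
    have h1 : Continuous fun t : ℝ => fderiv ℝ φ (t, X i t) := by
      exact (hφ.continuous_fderiv (by simp)).comp
        (continuous_id.prodMk (by
          have : Continuous fun s : ℝ => x0 i + v i * s :=
            continuous_const.add (continuous_const.mul continuous_id)
          refine this.congr fun s => (hX i s).symm))
      -- note: continuous_fderiv takes 1 ≤ ⊤
    exact ((ContinuousLinearMap.apply ℝ ℝ ((1 : ℝ), v i)).continuous).comp h1
  -- reduce the integral to an interval integral of a derivative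
  have hIoo : (∫ t in Ioo (0 : ℝ) T,
      (m i * deriv (fun s => φ (s, X i t)) t
        + (A (M (i + 1)) - A (M i)) * deriv (fun y => φ (t, y)) (X i t)))
      = ∫ t in (0 : ℝ)..T, m i * g' t := by
    rw [intervalIntegral.integral_of_le hT.le, ← integral_Ioc_eq_integral_Ioo]
    exact setIntegral_congr_fun measurableSet_Ioc fun t _ => hpart t
  rw [hIoo]
  have hint : (∫ t in (0 : ℝ)..T, g' t) = g T - g 0 :=
    intervalIntegral.integral_eq_sub_of_hasDerivAt (fun t _ => hgd t)
      (hgc.intervalIntegrable 0 T)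
  have hzero : ∀ t : ℝ, t ∉ Ioo (0 : ℝ) T → g t = 0 := by
    intro t ht
    by_contra h
    have : (t, X i t) ∈ tsupport φ := subset_closure (by simpa [hg] using h)
    exact ht (hsupp this).1
  rw [intervalIntegral.integral_const_mul, hint,
    hzero T (by simp), hzero 0 (by simp)]
  ring
end
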